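/- Let f_ε be a Lebesgue probability density on ℝ with characteristic function φ_ε satisfying Assumption 2: |φ_ε(ω)| ≥ 1 − b_ε|ω|^τ for all |ω| ≤ ω₀, with constants ω₀, b_ε, τ > 0. Let w satisfy 0 < w ≤ min{ω₀, (2b_ε)^{−1/τ}} and 2b_ε w^τ < 1. Then for every c ∈ ℝ, | ∫₀^w (1/(|φ_ε(ω)|² ω)) ∫_{−∞}^∞ sin( ω(c−u) ) f_ε(u) du dω | ≤ 2 + Σ_{k=1}^∞ (2b_ε w^τ)^k/(τk); in particular, if 2b_ε w^τ ≤ 1 − e^{−1} the right-hand side is at most 2 + 1/τ. -/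

import Mathlib

open MeasureTheory

/-- The characteristic function of a Lebesgue probability density `f` on `ℝ`. -/
noncomputable def charFunD (f : ℝ → ℝ) (ω : ℝ) : ℂ :=
  ∫ u : ℝ, Complex.exp (Complex.I * ω * u) * (f u : ℂ)

/-!
Split `1 / (|φ(ω)|² ω) = 1 / ω + (1 - |φ(ω)|²) / (|φ(ω)|² ω)`.

For the `1 / ω` part, Fubini on `[ε, w]`, where `|sin (ω t) / ω| ≤ 1 / ε` (`f` need not have a
first moment), gives
`∫_ε^w ∫ sin (ω (c - u)) f(u) du dω / ω = ∫ f(u) (Si (w (c - u)) - Si (ε (c - u))) du`,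
and letting `ε → 0` bounds it by `2`, because the sine integral `Si` satisfies `|Si| ≤ 2`:
`Si` is largest at `π`, where the Taylor bound `sin x ≤ x - x³/6 + x⁵/120` gives `Si π ≤ 2`,
and integration by parts puts the tail `∫_π^T sinc` in `[-2/π, 0]`.

For the other part, `|∫ sin (ω (c - u)) f(u) du| = |Im (e^{iωc} conj φ(ω))| ≤ |φ(ω)| ≤ 1` and
Assumption 2 bound the integrand by `2 b ω^(τ-1) / (1 - b w^τ)`. Its integral is
`x / (τ (1 - x/2))` with `x = 2 b w^τ`, which is termwise dominated by
`∑ x^k / (τ k) = -log (1 - x) / τ` since `k ≤ 2^(k-1)`.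
-/

open Real Set ComplexConjugate

noncomputable def sineIntegral (T : ℝ) : ℝ := ∫ x in 0..T, sinc x

theorem intervalIntegrable_sinc (a b : ℝ) : IntervalIntegrable sinc volume a b :=
  continuous_sinc.intervalIntegrable a b

@[fun_prop]
theorem continuous_sineIntegral : Continuous sineIntegral :=
  intervalIntegral.continuous_primitive intervalIntegrable_sinc 0

@[simp]
theorem sineIntegral_zero : sineIntegral 0 = 0 :=
  intervalIntegral.integral_same

theorem sineIntegral_neg (T : ℝ) : sineIntegral (-T) = -sineIntegral T := by
  rw [sineIntegral, sineIntegral, ← neg_zero, ← intervalIntegral.integral_comp_neg]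
  simp [sinc_neg, intervalIntegral.integral_symm 0 T]

theorem cos_le_taylor_four {x : ℝ} (hx : 0 ≤ x) : cos x ≤ 1 - x ^ 2 / 2 + x ^ 4 / 24 := by
  have h := intervalIntegral.integral_mono_on hx (μ := volume)
    ((by fun_prop : Continuous fun t : ℝ => t - t ^ 3 / 6).intervalIntegrable _ _)
    (continuous_sin.intervalIntegrable 0 x) fun t ht => sin_ge_sub_cube ht.1
  rw [intervalIntegral.integral_sub intervalIntegral.intervalIntegrable_id (by simp), integral_id,
    intervalIntegral.integral_div, integral_pow, integral_sin, cos_zero] at h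
  linarith

theorem sin_le_taylor_five {x : ℝ} (hx : 0 ≤ x) : sin x ≤ x - x ^ 3 / 6 + x ^ 5 / 120 := by
  have h := intervalIntegral.integral_mono_on hx (μ := volume)
    (continuous_cos.intervalIntegrable 0 x)
    ((by fun_prop : Continuous fun t : ℝ => 1 - t ^ 2 / 2 + t ^ 4 / 24).intervalIntegrable _ _)
    fun t ht => cos_le_taylor_four ht.1
  rw [intervalIntegral.integral_add (by simp) (by simp),
    intervalIntegral.integral_sub (by simp) (by simp), integral_one, intervalIntegral.integral_div,
    intervalIntegral.integral_div, integral_pow, integral_pow, integral_cos, sin_zero] at h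
  linarith

theorem abs_integral_sinc_sub_le {a b : ℝ} (ha : 0 < a) (hab : a ≤ b) :
    |(∫ x in a..b, sinc x) - cos a / a| ≤ 1 / a := by
  have hpos : ∀ x ∈ uIcc a b, 0 < x := fun x hx => ha.trans_le (by simpa [hab] using hx.1)
  have hinv : ∀ x ∈ uIcc a b, HasDerivAt (fun x => x⁻¹) (-(x ^ 2)⁻¹) x :=
    fun x hx => hasDerivAt_inv (hpos x hx).ne'
  have hsq : IntervalIntegrable (fun x : ℝ => (x ^ 2)⁻¹) volume a b :=
    (ContinuousOn.inv₀ (by fun_prop) fun x hx => (pow_pos (hpos x hx) 2).ne').intervalIntegrable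
  have hsq_eq : ∫ x in a..b, (x ^ 2)⁻¹ = 1 / a - 1 / b := by
    have := intervalIntegral.integral_eq_sub_of_hasDerivAt hinv hsq.neg
    rw [intervalIntegral.integral_neg] at this
    rw [one_div, one_div]
    linarith
  have hparts := intervalIntegral.integral_mul_deriv_eq_deriv_mul (v := fun x => -cos x) hinv
    (fun x _ => by simpa using (hasDerivAt_cos x).fun_neg) hsq.neg
    (continuous_sin.intervalIntegrable a b)
  have hsinc : ∫ x in a..b, sinc x = ∫ x in a..b, x⁻¹ * sin x :=
    intervalIntegral.integral_congr fun x hx => by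
      rw [sinc_of_ne_zero (hpos x hx).ne', div_eq_inv_mul]
  have hcos : |∫ x in a..b, (x ^ 2)⁻¹ * cos x| ≤ 1 / a - 1 / b := by
    rw [← hsq_eq, ← Real.norm_eq_abs]
    refine intervalIntegral.norm_integral_le_of_norm_le hab (ae_of_all _ fun x _ => ?_) hsq
    rw [norm_mul, norm_inv, norm_pow, Real.norm_eq_abs, sq_abs]
    exact mul_le_of_le_one_right (by positivity) (abs_cos_le_one x)
  have hcosb : |cos b / b| ≤ 1 / b := by
    rw [abs_div, abs_of_pos (ha.trans_le hab)]
    exact div_le_div_of_nonneg_right (abs_cos_le_one b) (ha.trans_le hab).le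
  have hsplit : (∫ x in a..b, sinc x) - cos a / a =
      -(cos b / b + ∫ x in a..b, (x ^ 2)⁻¹ * cos x) := by
    rw [hsinc, hparts]
    simp only [neg_mul_neg]
    ring
  rw [hsplit, abs_neg]
  linarith [abs_add_le (cos b / b) (∫ x in a..b, (x ^ 2)⁻¹ * cos x)]

theorem integral_sinc_nonneg {a b : ℝ} (ha : 0 ≤ a) (hab : a ≤ b) (hb : b ≤ π) :
    0 ≤ ∫ x in a..b, sinc x :=
  intervalIntegral.integral_nonneg hab fun x hx => by
    rcases (ha.trans hx.1).eq_or_lt with rfl | hx0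
    · simp
    · rw [sinc_of_ne_zero hx0.ne']
      exact div_nonneg (sin_nonneg_of_nonneg_of_le_pi hx0.le (hx.2.trans hb)) hx0.le

theorem sineIntegral_pi_le_two : sineIntegral π ≤ 2 := by
  have hle : ∀ x ∈ Icc 0 π, sinc x ≤ 1 - x ^ 2 / 6 + x ^ 4 / 120 := by
    rintro x ⟨hx0, -⟩
    rcases hx0.eq_or_lt with rfl | hx0
    · simp
    · rw [sinc_of_ne_zero hx0.ne', div_le_iff₀ hx0]
      linarith [sin_le_taylor_five hx0.le]
  have h := intervalIntegral.integral_mono_on pi_pos.le (intervalIntegrable_sinc 0 π)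
    ((by fun_prop : Continuous fun x : ℝ => 1 - x ^ 2 / 6 + x ^ 4 / 120).intervalIntegrable _ _) hle
  rw [intervalIntegral.integral_add (by simp) (by simp),
    intervalIntegral.integral_sub (by simp) (by simp), integral_one, intervalIntegral.integral_div,
    intervalIntegral.integral_div, integral_pow, integral_pow] at h
  rw [sineIntegral]
  nlinarith [pi_gt_three, pi_lt_d2, pow_pos pi_pos 2, pow_pos pi_pos 3,
    mul_pos (sub_pos.2 pi_gt_three) (sub_pos.2 pi_lt_d2)]

theorem abs_sineIntegral_le_two_of_nonneg {T : ℝ} (hT : 0 ≤ T) : |sineIntegral T| ≤ 2 := by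
  have hπ := sineIntegral_pi_le_two
  rw [sineIntegral] at hπ ⊢
  rcases le_total T π with hTπ | hπT
  · rw [← intervalIntegral.integral_add_adjacent_intervals (intervalIntegrable_sinc 0 T)
      (intervalIntegrable_sinc T π)] at hπ
    rw [abs_of_nonneg (integral_sinc_nonneg le_rfl hT hTπ)]
    linarith [integral_sinc_nonneg hT hTπ le_rfl]
  · have htail := abs_le.1 (abs_integral_sinc_sub_le pi_pos hπT)
    rw [cos_pi, neg_div] at htail
    have hπ0 := integral_sinc_nonneg le_rfl pi_pos.le le_rfl
    have hπ1 : 1 / π ≤ 1 := (div_le_one pi_pos).2 (by linarith [pi_gt_three])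
    rw [← intervalIntegral.integral_add_adjacent_intervals (intervalIntegrable_sinc 0 π)
      (intervalIntegrable_sinc π T), abs_le]
    constructor <;> linarith [htail.1, htail.2]

theorem abs_sineIntegral_le_two (T : ℝ) : |sineIntegral T| ≤ 2 := by
  rcases le_total 0 T with hT | hT
  · exact abs_sineIntegral_le_two_of_nonneg hT
  · simpa [sineIntegral_neg] using abs_sineIntegral_le_two_of_nonneg (neg_nonneg.2 hT)

noncomputable def sinConv (f : ℝ → ℝ) (c ω : ℝ) : ℝ := ∫ u, sin (ω * (c - u)) * f u

theorem norm_exp_I_mul_ofReal_mul_ofReal (a b : ℝ) : ‖Complex.exp (Complex.I * a * b)‖ = 1 := by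
  simp [Complex.norm_exp]

theorem norm_charFunD_le (f : ℝ → ℝ) (ω : ℝ) : ‖charFunD f ω‖ ≤ ∫ u, |f u| := by
  refine (norm_integral_le_integral_norm _).trans_eq (integral_congr_ae (ae_of_all _ fun u => ?_))
  dsimp only
  rw [norm_mul, norm_exp_I_mul_ofReal_mul_ofReal, one_mul, Complex.norm_real, Real.norm_eq_abs]

section

variable {f : ℝ → ℝ}

theorem sinConv_eq_im (hf : Integrable f) (c ω : ℝ) :
    sinConv f c ω = (Complex.exp (Complex.I * ω * c) * conj (charFunD f ω)).im := by
  have hexp : ∀ u : ℝ,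
      Complex.exp (Complex.I * ω * c) * conj (Complex.exp (Complex.I * ω * u) * f u) =
        Complex.exp ((ω * (c - u) : ℝ) * Complex.I) * f u := by
    intro u
    rw [map_mul, ← Complex.exp_conj, Complex.conj_ofReal, ← mul_assoc, ← Complex.exp_add]
    congr 2
    simp only [map_mul, Complex.conj_I, Complex.conj_ofReal]
    push_cast
    ring
  have hint : Integrable (fun u : ℝ => Complex.exp ((ω * (c - u) : ℝ) * Complex.I) * f u) :=
    hf.ofReal.bdd_mul (c := 1) (by fun_prop)
      (ae_of_all _ fun u => (Complex.norm_exp_ofReal_mul_I _).le)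
  rw [charFunD, ← integral_conj, ← integral_const_mul]
  simp_rw [hexp]
  rw [← RCLike.im_to_complex, ← integral_im hint, sinConv]
  congr 1
  ext u
  simp only [RCLike.im_to_complex, Complex.im_mul_ofReal, Complex.exp_ofReal_mul_I_im]

theorem abs_sinConv_le_norm_charFunD (hf : Integrable f) (c ω : ℝ) :
    |sinConv f c ω| ≤ ‖charFunD f ω‖ := by
  rw [sinConv_eq_im hf]
  refine (Complex.abs_im_le_norm _).trans_eq ?_
  rw [norm_mul, Complex.norm_conj, norm_exp_I_mul_ofReal_mul_ofReal, one_mul]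

theorem continuous_sinConv (hf : Integrable f) (c : ℝ) : Continuous (sinConv f c) :=
  continuous_of_dominated (bound := fun u => |f u|)
    (fun ω => (by fun_prop : Continuous fun u : ℝ => sin (ω * (c - u))).aestronglyMeasurable.mul
      hf.aestronglyMeasurable)
    (fun ω => ae_of_all _ fun u => by
      rw [norm_mul, Real.norm_eq_abs]
      exact mul_le_of_le_one_left (norm_nonneg _) (abs_sin_le_one _))
    hf.abs (ae_of_all _ fun u => by fun_prop)

theorem integral_sin_mul_div (t : ℝ) {ε w : ℝ} (hε : 0 < ε) (hεw : ε ≤ w) :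
    ∫ ω in ε..w, sin (ω * t) / ω = sineIntegral (w * t) - sineIntegral (ε * t) := by
  have hsinc : ∀ ω ∈ uIcc ε w, sin (ω * t) / ω = t • sinc (ω * t) := by
    intro ω hω
    have hω : 0 < ω := hε.trans_le (by simpa [hεw] using hω.1)
    rcases eq_or_ne t 0 with rfl | ht
    · simp
    · rw [sinc_of_ne_zero (mul_ne_zero hω.ne' ht), smul_eq_mul]
      field_simp
  rw [intervalIntegral.integral_congr hsinc, intervalIntegral.integral_smul,
    intervalIntegral.smul_integral_comp_mul_right, sineIntegral, sineIntegral,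
    intervalIntegral.integral_interval_sub_left (intervalIntegrable_sinc _ _)
      (intervalIntegrable_sinc _ _)]

theorem integral_sinConv_div (hf : Integrable f) (c : ℝ) {ε w : ℝ} (hε : 0 < ε) (hεw : ε ≤ w) :
    ∫ ω in ε..w, sinConv f c ω / ω =
      ∫ u, f u * (sineIntegral (w * (c - u)) - sineIntegral (ε * (c - u))) := by
  have hmem : ∀ᵐ p ∂(volume.restrict (Ioc ε w)).prod (volume : Measure ℝ), p.1 ∈ Ioc ε w :=
    Measure.quasiMeasurePreserving_fst.ae (ae_restrict_mem measurableSet_Ioc)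
  have hint : Integrable (Function.uncurry fun ω u => sin (ω * (c - u)) * f u / ω)
      ((volume.restrict (Ioc ε w)).prod (volume : Measure ℝ)) := by
    refine Integrable.mono' ((integrable_const ε⁻¹).mul_prod hf.abs) ?_ ?_
    · exact ((continuous_sin.comp (by fun_prop)).aestronglyMeasurable.mul
        hf.aestronglyMeasurable.comp_snd).mul measurable_fst.inv.aestronglyMeasurable
    · filter_upwards [hmem] with p hp
      have hp0 : 0 < p.1 := hε.trans hp.1
      rw [Function.uncurry_apply_pair, norm_div, norm_mul, Real.norm_eq_abs, Real.norm_eq_abs,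
        Real.norm_eq_abs, abs_of_pos hp0, div_le_iff₀ hp0]
      calc |sin (p.1 * (c - p.2))| * |f p.2| ≤ 1 * |f p.2| := by gcongr; exact abs_sin_le_one _
        _ ≤ ε⁻¹ * p.1 * |f p.2| := by gcongr; rw [← div_eq_inv_mul, one_le_div hε]; exact hp.1.le
        _ = ε⁻¹ * |f p.2| * p.1 := by ring
  simp_rw [sinConv, ← integral_div]
  rw [intervalIntegral_integral_swap (by rwa [uIoc_of_le hεw])]
  congr 1
  ext u
  simp_rw [mul_comm _ (f u), mul_div_assoc]
  rw [intervalIntegral.integral_const_mul, integral_sin_mul_div _ hε hεw]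

theorem abs_integral_sinConv_div_le (hf : Integrable f) (c : ℝ) {w : ℝ} (hw : 0 < w) :
    |∫ ω in 0..w, sinConv f c ω / ω| ≤ 2 * ∫ u, |f u| := by
  by_cases hA : IntervalIntegrable (fun ω => sinConv f c ω / ω) volume 0 w
  swap
  · rw [intervalIntegral.integral_undef hA, abs_zero]
    exact mul_nonneg zero_le_two (integral_nonneg fun u => abs_nonneg _)
  set g : ℝ → ℝ := fun ε => ∫ u, f u * (sineIntegral (w * (c - u)) - sineIntegral (ε * (c - u)))
  have hg : Continuous g := by
    refine continuous_of_dominated (bound := fun u => 4 * |f u|) (fun ε => ?_) (fun ε => ?_)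
      (hf.abs.const_mul 4) (ae_of_all _ fun u => by fun_prop)
    · exact hf.aestronglyMeasurable.mul (by fun_prop)
    · refine ae_of_all _ fun u => ?_
      rw [norm_mul, Real.norm_eq_abs, Real.norm_eq_abs, mul_comm]
      refine mul_le_mul_of_nonneg_right ((abs_sub _ _).trans ?_) (abs_nonneg _)
      linarith [abs_sineIntegral_le_two (w * (c - u)), abs_sineIntegral_le_two (ε * (c - u))]
  have hprim := intervalIntegral.continuousOn_primitive_interval_left
    ((intervalIntegrable_iff' (μ := volume)).1 hA)
  rw [uIcc_of_le hw.le] at hprim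
  have heq : EqOn (fun ε => ∫ ω in ε..w, sinConv f c ω / ω) g (Icc 0 w) :=
    EqOn.of_subset_closure (fun ε hε => integral_sinConv_div hf c hε.1 hε.2) hprim
      hg.continuousOn Ioc_subset_Icc_self (closure_Ioc hw.ne).ge
  rw [show ∫ ω in 0..w, sinConv f c ω / ω = g 0 from heq (left_mem_Icc.2 hw.le),
    ← Real.norm_eq_abs, ← integral_const_mul]
  refine norm_integral_le_of_norm_le (hf.abs.const_mul 2) (ae_of_all _ fun u => ?_)
  simp only [zero_mul, sineIntegral_zero, sub_zero, norm_mul, Real.norm_eq_abs]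
  rw [mul_comm]
  exact mul_le_mul_of_nonneg_right (abs_sineIntegral_le_two _) (abs_nonneg _)

theorem abs_div_sq_sub_self_le {s Φ δ η : ℝ} (hs : |s| ≤ Φ) (hΦ : Φ ≤ 1) (hδ : 1 - δ ≤ Φ)
    (hδη : δ ≤ η) (hη : η < 1) : |s / Φ ^ 2 - s| ≤ 2 * δ / (1 - η) := by
  have hΦ0 : 0 < Φ := by linarith
  have hsq : 0 ≤ (1 - Φ ^ 2) / Φ ^ 2 := div_nonneg (by nlinarith) (sq_nonneg Φ)
  rw [show s / Φ ^ 2 - s = s * ((1 - Φ ^ 2) / Φ ^ 2) by field_simp, abs_mul, abs_of_nonneg hsq]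
  calc |s| * ((1 - Φ ^ 2) / Φ ^ 2) ≤ Φ * ((1 - Φ ^ 2) / Φ ^ 2) := by gcongr
    _ = (1 + Φ) * (1 - Φ) / Φ := by field_simp; ring
    _ ≤ 2 * δ / (1 - η) := by gcongr <;> linarith

theorem abs_integral_le_of_abs_le_mul_rpow {g : ℝ → ℝ} {C τ w : ℝ} (hτ : 0 < τ) (hw : 0 ≤ w)
    (hg : ∀ ω ∈ Ioc 0 w, |g ω| ≤ C * ω ^ (τ - 1)) : |∫ ω in 0..w, g ω| ≤ C * w ^ τ / τ := by
  rw [← Real.norm_eq_abs]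
  refine (intervalIntegral.norm_integral_le_of_norm_le hw (ae_of_all _ hg)
    ((intervalIntegral.intervalIntegrable_rpow' (by linarith)).const_mul C)).trans_eq ?_
  rw [intervalIntegral.integral_const_mul, integral_rpow (Or.inl (by linarith)), sub_add_cancel,
    zero_rpow hτ.ne', sub_zero, mul_div_assoc]

theorem abs_inv_sq_mul_sinConv_sub_le (hf : Integrable f) (hf1 : ∫ u, |f u| = 1) (c : ℝ)
    {ω δ η : ℝ} (hω : 0 < ω) (hδ : 1 - δ ≤ ‖charFunD f ω‖) (hδη : δ ≤ η) (hη : η < 1) :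
    |1 / (‖charFunD f ω‖ ^ 2 * ω) * sinConv f c ω - sinConv f c ω / ω| ≤ 2 * δ / (1 - η) / ω := by
  have key := abs_div_sq_sub_self_le (abs_sinConv_le_norm_charFunD hf c ω)
    ((norm_charFunD_le f ω).trans_eq hf1) hδ hδη hη
  rw [show 1 / (‖charFunD f ω‖ ^ 2 * ω) * sinConv f c ω - sinConv f c ω / ω =
      (sinConv f c ω / ‖charFunD f ω‖ ^ 2 - sinConv f c ω) / ω by ring, abs_div, abs_of_pos hω]
  exact div_le_div_of_nonneg_right key hω.le

theorem abs_integral_inv_sq_mul_sinConv_le (hf0 : ∀ u, 0 ≤ f u) (hf1 : ∫ u, f u = 1)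
    {b τ w : ℝ} (hb : 0 ≤ b) (hτ : 0 < τ) (hw : 0 < w) (hbw : b * w ^ τ < 1)
    (hφ : ∀ ω ∈ Ioc 0 w, 1 - b * ω ^ τ ≤ ‖charFunD f ω‖) (c : ℝ) :
    |∫ ω in 0..w, 1 / (‖charFunD f ω‖ ^ 2 * ω) * sinConv f c ω| ≤
      2 + 2 * b * w ^ τ / (τ * (1 - b * w ^ τ)) := by
  have hf : Integrable f := integrable_of_integral_eq_one hf1
  have hf_abs : ∫ u, |f u| = 1 := by simpa only [abs_of_nonneg (hf0 _)] using hf1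
  have hbw' : 0 < 1 - b * w ^ τ := by linarith
  set C := 2 * b / (1 - b * w ^ τ)
  set A := fun ω => sinConv f c ω / ω
  set B := fun ω => 1 / (‖charFunD f ω‖ ^ 2 * ω) * sinConv f c ω - A ω
  by_cases hint : IntervalIntegrable (fun ω => 1 / (‖charFunD f ω‖ ^ 2 * ω) * sinConv f c ω)
    volume 0 w
  swap
  · rw [intervalIntegral.integral_undef hint, abs_zero]
    positivity
  have hB : ∀ ω ∈ Ioc 0 w, |B ω| ≤ C * ω ^ (τ - 1) := by
    rintro ω ⟨hω0, hωw⟩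
    have hδη : b * ω ^ τ ≤ b * w ^ τ := by gcongr
    refine (abs_inv_sq_mul_sinConv_sub_le hf hf_abs c hω0 (hφ ω ⟨hω0, hωw⟩) hδη hbw).trans_eq ?_
    rw [rpow_sub_one hω0.ne']
    ring
  have hBint : IntervalIntegrable B volume 0 w := by
    have hrpow := intervalIntegral.intervalIntegrable_rpow' (a := 0) (b := w) (r := τ - 1)
      (by linarith)
    refine (hrpow.const_mul C).mono_fun'
      (hint.def'.aestronglyMeasurable.sub
        ((continuous_sinConv hf c).measurable.div measurable_id).aestronglyMeasurable) ?_
    filter_upwards [ae_restrict_mem measurableSet_uIoc] with ω hω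
    rw [uIoc_of_le hw.le] at hω
    exact hB ω hω
  have hAint : IntervalIntegrable A volume 0 w := by simpa [B] using hint.sub hBint
  calc |∫ ω in 0..w, 1 / (‖charFunD f ω‖ ^ 2 * ω) * sinConv f c ω|
      = |(∫ ω in 0..w, A ω) + ∫ ω in 0..w, B ω| := by
        rw [← intervalIntegral.integral_add hAint hBint]
        simp only [B, add_sub_cancel]
    _ ≤ |∫ ω in 0..w, A ω| + |∫ ω in 0..w, B ω| := abs_add_le _ _
    _ ≤ 2 * 1 + C * w ^ τ / τ := add_le_add (hf_abs ▸ abs_integral_sinConv_div_le hf c hw)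
        (abs_integral_le_of_abs_le_mul_rpow hτ hw.le hB)
    _ = 2 + 2 * b * w ^ τ / (τ * (1 - b * w ^ τ)) := by
        simp only [C]
        field_simp

end

theorem hasSum_pow_succ_div_mul (τ : ℝ) {x : ℝ} (hx : |x| < 1) :
    HasSum (fun k : ℕ => x ^ (k + 1) / (τ * (k + 1))) (-log (1 - x) / τ) := by
  simpa only [div_div, mul_comm] using (Real.hasSum_pow_div_log_of_abs_lt_one hx).div_const τ

theorem div_one_sub_half_le_neg_log_one_sub {x : ℝ} (hx0 : 0 ≤ x) (hx1 : x < 1) :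
    x / (1 - x / 2) ≤ -log (1 - x) := by
  have hgeom := (hasSum_geometric_of_lt_one (by positivity : 0 ≤ x / 2) (by linarith)).mul_left x
  rw [← div_eq_mul_inv] at hgeom
  refine hasSum_le (fun k => ?_) hgeom
    (Real.hasSum_pow_div_log_of_abs_lt_one (by rwa [abs_of_nonneg hx0]))
  have hk : (k : ℝ) + 1 ≤ 2 ^ k := by exact_mod_cast Nat.lt_two_pow_self
  rw [div_pow, ← mul_div_assoc, ← pow_succ']
  gcongr

theorem low_frequency_bound_general (fε : ℝ → ℝ)
    (hfε0 : ∀ u, 0 ≤ fε u) (hfε1 : ∫ u, fε u = 1)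
    (ω₀ bε τ : ℝ) (hbε : 0 < bε) (hτ : 0 < τ)
    (hA2 : ∀ ω : ℝ, |ω| ≤ ω₀ → 1 - bε * |ω| ^ τ ≤ ‖charFunD fε ω‖)
    (w : ℝ) (hw0 : 0 < w) (hw : w ≤ min ω₀ ((2 * bε) ^ (-1/τ)))
    (hw1 : 2 * bε * w ^ τ < 1) :
    (∀ c : ℝ,
      |∫ ω in (0:ℝ)..w, (1 / (‖charFunD fε ω‖ ^ 2 * ω)) *
          ∫ u : ℝ, Real.sin (ω * (c - u)) * fε u| ≤
        2 + ∑' k : ℕ, (2 * bε * w ^ τ) ^ (k + 1) / (τ * (k + 1))) ∧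
    (2 * bε * w ^ τ ≤ 1 - Real.exp (-1) →
      2 + (∑' k : ℕ, (2 * bε * w ^ τ) ^ (k + 1) / (τ * (k + 1))) ≤ 2 + 1 / τ) := by
  set x := 2 * bε * w ^ τ with hx
  have hx0 : 0 ≤ x := by positivity
  rw [(hasSum_pow_succ_div_mul τ (abs_lt.2 ⟨by linarith, hw1⟩)).tsum_eq]
  refine ⟨fun c => ?_, fun hxe => ?_⟩
  · have hφ : ∀ ω ∈ Ioc 0 w, 1 - bε * ω ^ τ ≤ ‖charFunD fε ω‖ := fun ω hω => by
      simpa [abs_of_pos hω.1] using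
        hA2 ω ((abs_of_pos hω.1).trans_le (hω.2.trans (hw.trans (min_le_left _ _))))
    calc _ ≤ 2 + 2 * bε * w ^ τ / (τ * (1 - bε * w ^ τ)) :=
          abs_integral_inv_sq_mul_sinConv_le hfε0 hfε1 hbε.le hτ hw0 (by linarith) hφ c
      _ = 2 + x / (1 - x / 2) / τ := by rw [hx]; field_simp
      _ ≤ 2 + -log (1 - x) / τ := by
          gcongr
          exact div_one_sub_half_le_neg_log_one_sub hx0 hw1
  · have hlog : -1 ≤ log (1 - x) := by
      rw [← log_exp (-1)]
      exact log_le_log (exp_pos _) (by linarith)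
    gcongr
    linarith

/-- bound on the low-frequency integral `I₁`.  Under Assumption 2 on `φ_ε`,
for `0 < w ≤ min{ω₀, (2b_ε)^{−1/τ}}` with `2b_ε w^τ < 1` and every `c ∈ ℝ`,
`|∫₀^w (|φ_ε(ω)|² ω)^{−1} ∫ sin(ω(c−u)) f_ε(u) du dω| ≤ 2 + Σ_{k≥1} (2b_ε w^τ)^k/(τk)`;
moreover if `2b_ε w^τ ≤ 1 − e^{−1}`, this right-hand side is at most `2 + 1/τ`. -/
theorem low_frequency_bound (fε : ℝ → ℝ)
    (hfεm : Measurable fε) (hfε0 : ∀ u, 0 ≤ fε u) (hfε1 : ∫ u, fε u = 1)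
    (ω₀ bε τ : ℝ) (hω₀ : 0 < ω₀) (hbε : 0 < bε) (hτ : 0 < τ)
    (hA2 : ∀ ω : ℝ, |ω| ≤ ω₀ → 1 - bε * |ω| ^ τ ≤ ‖charFunD fε ω‖)
    (w : ℝ) (hw0 : 0 < w) (hw : w ≤ min ω₀ ((2 * bε) ^ (-1/τ)))
    (hw1 : 2 * bε * w ^ τ < 1) :
    (∀ c : ℝ,
      |∫ ω in (0:ℝ)..w, (1 / (‖charFunD fε ω‖ ^ 2 * ω)) *
          ∫ u : ℝ, Real.sin (ω * (c - u)) * fε u| ≤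
        2 + ∑' k : ℕ, (2 * bε * w ^ τ) ^ (k + 1) / (τ * (k + 1))) ∧
    (2 * bε * w ^ τ ≤ 1 - Real.exp (-1) →
      2 + (∑' k : ℕ, (2 * bε * w ^ τ) ^ (k + 1) / (τ * (k + 1))) ≤ 2 + 1 / τ) :=
  low_frequency_bound_general fε hfε0 hfε1 ω₀ bε τ hbε hτ hA2 w hw0 hw hw1
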